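/- arXiv:2306.03062 — 2 statements merged into one kernel-verified Lean document; each statement's English description precedes it below -/
import Mathlib

section
/- On a normal metric weak para-f-structure, the tensors N^{(3)}_i = £_{ξ_i} f vanish, i.e., the Lie derivative of f along each characteristic vector field ξ_i is zero. -/
open scoped BigOperators

noncomputable section

variable (C V : Type*) [CommRing C] [Algebra ℝ C] [AddCommGroup V]
  [Module ℝ V] [Module C V] [IsScalarTower ℝ C V]

/-- A metric weak para-f-structure on a manifold, modelled algebraically:
`C` plays the role of the ring of smooth functions, `V` the `C`-module of vector fields
with Lie bracket `b` and derivation action `act` of vector fields on functions,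
`g` is a compatible pseudo-Riemannian metric (with `f` of rank `2n`, encoded by `hrank`)
and `nabla` its Levi-Civita connection (torsion-free and metric). -/
structure MWPF (p : ℕ) where
  f : V →ₗ[C] V
  Q : V →ₗ[C] V
  ξ : Fin p → V
  η : Fin p → V →ₗ[C] C
  g : V →ₗ[C] V →ₗ[C] C
  b : V → V → V
  act : V → C → C
  nabla : V → V → V
  hQbij : Function.Bijective Q
  hf2 : ∀ X, f (f X) = Q X - ∑ i, η i X • ξ i
  hf3 : ∀ X, f (f (f X)) = f (Q X)
  hetaxi : ∀ i j, η i (ξ j) = if i = j then (1 : C) else 0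
  hQxi : ∀ i, Q (ξ i) = ξ i
  hrange : ∀ X : V, X ∈ LinearMap.range f ↔ ∀ i, η i X = 0
  hgsymm : ∀ X Y, g X Y = g Y X
  hgnondeg : ∀ X, (∀ Y, g X Y = 0) → X = 0
  hrank : ∀ Z, (∀ i, η i Z = 0) → (∀ Y, g Z (f Y) = 0) → Z = 0
  hgcompat : ∀ X Y, g (f X) (f Y) = -(g X (Q Y)) + ∑ i, η i X * η i Y
  hbskew : ∀ X Y, b X Y = - b Y X
  hbaddl : ∀ X Y Z, b (X + Y) Z = b X Z + b Y Z
  hjacobi : ∀ X Y Z, b X (b Y Z) + b Y (b Z X) + b Z (b X Y) = 0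
  hactadd : ∀ X a c, act X (a + c) = act X a + act X c
  hactmul : ∀ X a c, act X (a * c) = act X a * c + a * act X c
  hactX : ∀ (a : C) X Y c, act (a • X + Y) c = a * act X c + act Y c
  hbleib : ∀ X (a : C) Y, b X (a • Y) = act X a • Y + a • b X Y
  hnab1 : ∀ (a : C) X X' Y, nabla (a • X + X') Y = a • nabla X Y + nabla X' Y
  hnabadd : ∀ X Y Z, nabla X (Y + Z) = nabla X Y + nabla X Z
  hnableib : ∀ X (a : C) Y, nabla X (a • Y) = act X a • Y + a • nabla X Y
  htors : ∀ X Y, nabla X Y - nabla Y X = b X Y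
  hmetric : ∀ X Y Z, act X (g Y Z) = g (nabla X Y) Z + g Y (nabla X Z)

namespace MWPF

variable {C V} {p : ℕ} (s : MWPF C V p)

/-- The fundamental 2-form `Φ(X,Y) = g(X, fY)`. -/
def Phi (X Y : V) : C := s.g X (s.f Y)

/-- `dη^i(X,Y) = (1/2)(X(η^i Y) - Y(η^i X) - η^i [X,Y])`. -/
def dEta (i : Fin p) (X Y : V) : C :=
  (2⁻¹ : ℝ) • (s.act X (s.η i Y) - s.act Y (s.η i X) - s.η i (s.b X Y))

/-- The Nijenhuis torsion `[f,f]`. -/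
def Nij (X Y : V) : V :=
  s.f (s.f (s.b X Y)) + s.b (s.f X) (s.f Y) - s.f (s.b (s.f X) Y) - s.f (s.b X (s.f Y))

/-- `N^(1)(X,Y) = [f,f](X,Y) - 2 Σ_i dη^i(X,Y) ξ_i`. -/
def N1 (X Y : V) : V := s.Nij X Y - (2 : ℝ) • ∑ i, s.dEta i X Y • s.ξ i

/-- The difference tensor `Q̃ = Q - id`. -/
def Qt (X : V) : V := s.Q X - X

/-- The Lie derivative of `f`: `(£_Z f)X = [Z, fX] - f[Z,X]`. -/
def Lief (Z X : V) : V := s.b Z (s.f X) - s.f (s.b Z X)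

/-- The Lie derivative of `g`: `(£_Z g)(X,Y) = Z(g(X,Y)) - g([Z,X],Y) - g(X,[Z,Y])`. -/
def Lieg (Z X Y : V) : C := s.act Z (s.g X Y) - s.g (s.b Z X) Y - s.g X (s.b Z Y)

/-- `N^(2)_i(X,Y) = (£_{fX} η^i)Y - (£_{fY} η^i)X`. -/
def N2 (i : Fin p) (X Y : V) : C :=
  (s.act (s.f X) (s.η i Y) - s.η i (s.b (s.f X) Y))
    - (s.act (s.f Y) (s.η i X) - s.η i (s.b (s.f Y) X))

/-- The exterior differential of the fundamental 2-form. -/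
def dPhi (X Y Z : V) : C := (3⁻¹ : ℝ) •
  (s.act X (s.Phi Y Z) + s.act Y (s.Phi Z X) + s.act Z (s.Phi X Y)
    - s.Phi (s.b X Y) Z - s.Phi (s.b Z X) Y - s.Phi (s.b Y Z) X)

/-- The tensor `h_i = (1/2) £_{ξ_i} f`. -/
def hmap (i : Fin p) (X : V) : V := (2⁻¹ : ℝ) • s.Lief (s.ξ i) X

/-- The tensor `N^(5)`. -/
def N5 (X Y Z : V) : C :=
  s.act (s.f Z) (s.g X (s.Qt Y)) - s.act (s.f Y) (s.g X (s.Qt Z))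
    + s.g (s.b X (s.f Z)) (s.Qt Y) - s.g (s.b X (s.f Y)) (s.Qt Z)
    + s.g (s.b Y (s.f Z) - s.b Z (s.f Y) - s.f (s.b Y Z)) (s.Qt X)

/-- The curvature tensor of `nabla`. -/
def Rm (X Y Z : V) : V :=
  s.nabla X (s.nabla Y Z) - s.nabla Y (s.nabla X Z) - s.nabla (s.b X Y) Z

end MWPF

/-!
Evaluate the normality tensor at `(X, ξ_i)`. Since `f ξ_i = 0` and each `η^j(ξ_i)` is
constant, `N^(1)(X, ξ_i)` splits into `f((£_{ξ_i} f) X)`, which lies in the image of `f`,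
and `Σ_j ((£_{ξ_i} η^j) X) ξ_j`. Applying the `η^k` separates the two parts, so normality
gives `£_{ξ_i} η^j = 0` and `f ∘ £_{ξ_i} f = 0`. The first also kills `η^j ∘ £_{ξ_i} f`,
and a vector annihilated by `f` and by every `η^j` is zero, because
`f² = Q - Σ_j η^j ⊗ ξ_j` with `Q` injective.
-/

namespace MWPF

variable {C V : Type*} [CommRing C] [AddCommGroup V] [Module C V] {p : ℕ} (s : MWPF C V p)

theorem act_zero (X : V) : s.act X 0 = 0 := by
  simpa using s.hactadd X 0 0

theorem act_one (X : V) : s.act X 1 = 0 := by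
  simpa using s.hactmul X 1 1

theorem act_eta_xi (X : V) (j i : Fin p) : s.act X (s.η j (s.ξ i)) = 0 := by
  rw [s.hetaxi]
  split_ifs
  · exact s.act_one X
  · exact s.act_zero X

theorem b_zero_left (X : V) : s.b 0 X = 0 := by
  simpa using s.hbaddl 0 0 X

theorem b_zero_right (X : V) : s.b X 0 = 0 := by
  rw [s.hbskew, s.b_zero_left, neg_zero]

theorem eta_f (j : Fin p) (X : V) : s.η j (s.f X) = 0 :=
  (s.hrange (s.f X)).mp ⟨X, rfl⟩ j

theorem eta_sum_smul_xi (c : Fin p → C) (k : Fin p) : s.η k (∑ j, c j • s.ξ j) = c k := by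
  simp [s.hetaxi]

theorem sum_eta_xi_smul_xi (i : Fin p) : ∑ j, s.η j (s.ξ i) • s.ξ j = s.ξ i := by
  simp [s.hetaxi]

theorem f_xi (i : Fin p) : s.f (s.ξ i) = 0 := by
  have hf2 : s.f (s.f (s.ξ i)) = 0 := by rw [s.hf2, s.hQxi, s.sum_eta_xi_smul_xi, sub_self]
  rw [← s.hQxi i, ← s.hf3, hf2, map_zero]

theorem eq_zero_of_f_eq_zero_of_eta_eq_zero {X : V} (hf : s.f X = 0)
    (hη : ∀ j, s.η j X = 0) : X = 0 := by
  have hQ : s.Q X = 0 := by simpa [hf, hη] using (s.hf2 X).symm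
  exact s.hQbij.injective (by rw [hQ, map_zero])

theorem Nij_xi_right (X : V) (i : Fin p) : s.Nij X (s.ξ i) = s.f (s.Lief (s.ξ i) X) := by
  rw [Nij, Lief, s.f_xi, s.b_zero_right, s.b_zero_right, map_zero, s.hbskew X, s.hbskew (s.f X),
    map_sub, map_neg, map_neg, map_neg]
  abel

def LieEta (j : Fin p) (Z X : V) : C := s.act Z (s.η j X) - s.η j (s.b Z X)

theorem eta_Lief (j : Fin p) (Z X : V) : s.η j (s.Lief Z X) = -s.LieEta j Z (s.f X) := by
  rw [Lief, LieEta, map_sub, s.eta_f, s.eta_f, s.act_zero]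
  ring

section

variable [Algebra ℝ C]

theorem two_smul_dEta_xi_right (j : Fin p) (X : V) (i : Fin p) :
    (2 : ℝ) • s.dEta j X (s.ξ i) = -s.LieEta j (s.ξ i) X := by
  rw [dEta, smul_smul, mul_inv_cancel₀ two_ne_zero, one_smul, s.act_eta_xi, LieEta, s.hbskew X,
    map_neg]
  ring

variable [Module ℝ V] [IsScalarTower ℝ C V]

theorem N1_xi_right (X : V) (i : Fin p) :
    s.N1 X (s.ξ i) = s.f (s.Lief (s.ξ i) X) + ∑ j, s.LieEta j (s.ξ i) X • s.ξ j := by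
  simp only [N1, s.Nij_xi_right, Finset.smul_sum, ← smul_assoc, s.two_smul_dEta_xi_right,
    neg_smul, Finset.sum_neg_distrib, sub_neg_eq_add]

variable {s}

theorem LieEta_xi_eq_zero_of_normal (hN : ∀ X Y, s.N1 X Y = 0) (j i : Fin p)
    (X : V) : s.LieEta j (s.ξ i) X = 0 := by
  have h := congrArg (s.η j) (hN X (s.ξ i))
  rwa [s.N1_xi_right, map_add, s.eta_f, s.eta_sum_smul_xi, zero_add, map_zero] at h

theorem f_Lief_xi_eq_zero_of_normal (hN : ∀ X Y, s.N1 X Y = 0) (i : Fin p)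
    (X : V) : s.f (s.Lief (s.ξ i) X) = 0 := by
  simpa [s.N1_xi_right, LieEta_xi_eq_zero_of_normal hN] using hN X (s.ξ i)

end

end MWPF

/-- on a normal metric weak para-f-structure,
`N^(3)_i = £_{ξ_i} f` vanishes for each `i`. -/
theorem normal_Lief_xi_eq_zero {C V : Type*} [CommRing C] [Algebra ℝ C] [AddCommGroup V]
    [Module ℝ V] [Module C V] [IsScalarTower ℝ C V] {p : ℕ} (s : MWPF C V p)
    (hN : ∀ X Y, s.N1 X Y = 0) :
    ∀ (i : Fin p) (X : V), s.Lief (s.ξ i) X = 0 := by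
  intro i X
  refine s.eq_zero_of_f_eq_zero_of_eta_eq_zero (MWPF.f_Lief_xi_eq_zero_of_normal hN i X)
    fun j => ?_
  rw [s.eta_Lief, MWPF.LieEta_xi_eq_zero_of_normal hN, neg_zero]
end
end

section
/- On a weak almost para-S-manifold, h_i ξ_j = 0 for all i, j, where h_i = (1/2) £_{ξ_i} f. -/
/-!
Since `dη^i` is skew, `dη^i = Φ` makes `Φ` skew. Then `f ξ_k`, which lies in the image of `f`,
satisfies `Φ(f ξ_k, Y) = -g(Y, f² ξ_k) = 0` for all `Y`, so `f ξ_k = 0` by the rank condition.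
Consequently `dη^k(ξ_l, ·) = Φ(ξ_l, ·) = 0`, i.e. `η^k [ξ_l, Y] = ξ_l (η^k Y)`; for `Y = ξ_m`,
where `η^k ξ_m` is constant, this is `η^k [ξ_l, ξ_m] = 0`. Combined with the Jacobi identity
(which also makes `act` a Lie algebra action) it gives `Φ([ξ_l, ξ_m], ·) = dη^l([ξ_l, ξ_m], ·) = 0`,
so `[ξ_l, ξ_m] = 0`, again by the rank condition. Hence `2 h_i ξ_j = [ξ_i, f ξ_j] - f [ξ_i, ξ_j] = 0`.
-/

open scoped BigOperators

noncomputable section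

variable (C V : Type*) [CommRing C] [Algebra ℝ C] [AddCommGroup V]
  [Module ℝ V] [Module C V] [IsScalarTower ℝ C V]

namespace MWPF

variable {C V : Type*} [CommRing C] [AddCommGroup V] [Module C V] {p : ℕ} (s : MWPF C V p)

theorem act_η_ξ (X : V) (k l : Fin p) : s.act X (s.η k (s.ξ l)) = 0 := by
  rw [s.hetaxi]
  split_ifs
  · exact s.act_one X
  · exact s.act_zero X

theorem b_add_right (X Y Z : V) : s.b X (Y + Z) = s.b X Y + s.b X Z := by
  rw [s.hbskew X, s.hbaddl, s.hbskew Y, s.hbskew Z]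
  abel

theorem b_neg_right (X Y : V) : s.b X (-Y) = -s.b X Y := by
  refine eq_neg_of_add_eq_zero_left ?_
  rw [← s.b_add_right, neg_add_cancel, b_zero_right]

/-- The Jacobi identity for `X, Y, a • Z`, expanded by the Leibniz rule, leaves only the
defect of `act` being a Lie algebra action. -/
theorem act_b_smul (X Y Z : V) (a : C) :
    s.act (s.b X Y) a • Z = (s.act X (s.act Y a) - s.act Y (s.act X a)) • Z := by
  have expand : ∀ U W : V, s.b U (s.b W (a • Z)) = s.act U (s.act W a) • Z
      + s.act W a • s.b U Z + s.act U a • s.b W Z + a • s.b U (s.b W Z) := by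
    intro U W
    rw [s.hbleib W, s.b_add_right, s.hbleib U, s.hbleib U]
    abel
  have J := s.hjacobi X Y (a • Z)
  rw [s.hbskew (a • Z) X, s.hbskew (a • Z) (s.b X Y), s.b_neg_right, expand, expand,
    s.hbleib] at J
  have JZ := s.hjacobi X Y Z
  rw [s.hbskew Z X, s.hbskew Z (s.b X Y), s.b_neg_right] at JZ
  linear_combination (norm := module) -J + a • JZ

theorem f_f_ξ (k : Fin p) : s.f (s.f (s.ξ k)) = 0 := by
  rw [s.hf2, s.hQxi, sub_eq_zero]
  simp [s.hetaxi, ite_smul]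

variable [Algebra ℝ C]

def IsAlmostParaS : Prop := ∀ i X Y, s.dEta i X Y = s.Phi X Y

theorem dEta_eq_zero_iff (i : Fin p) (X Y : V) :
    s.dEta i X Y = 0 ↔ s.act X (s.η i Y) - s.act Y (s.η i X) - s.η i (s.b X Y) = 0 :=
  (isUnit_iff_ne_zero.mpr (by norm_num : (2⁻¹ : ℝ) ≠ 0)).smul_eq_zero

theorem dEta_swap (i : Fin p) (X Y : V) : s.dEta i Y X = -s.dEta i X Y := by
  rw [dEta, dEta, s.hbskew Y X, map_neg, ← smul_neg]
  congr 1
  ring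

variable {s}

theorem IsAlmostParaS.Phi_swap (hS : s.IsAlmostParaS) (i : Fin p) (X Y : V) :
    s.Phi Y X = -s.Phi X Y := by
  rw [← hS i, ← hS i, dEta_swap]

theorem IsAlmostParaS.f_ξ (hS : s.IsAlmostParaS) (k : Fin p) : s.f (s.ξ k) = 0 := by
  refine s.hrank _ ((s.hrange _).mp ⟨s.ξ k, rfl⟩) fun Y => ?_
  change s.Phi _ Y = 0
  rw [hS.Phi_swap k, Phi, s.f_f_ξ, map_zero, neg_zero]

theorem IsAlmostParaS.η_b_ξ (hS : s.IsAlmostParaS) (k l : Fin p) (Y : V) :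
    s.η k (s.b (s.ξ l) Y) = s.act (s.ξ l) (s.η k Y) := by
  have h : s.dEta k (s.ξ l) Y = 0 := by
    rw [hS, hS.Phi_swap k, Phi, hS.f_ξ, map_zero, neg_zero]
  rw [dEta_eq_zero_iff, act_η_ξ] at h
  linear_combination -h

theorem IsAlmostParaS.η_b_b_ξ_ξ (hS : s.IsAlmostParaS) (k l m : Fin p) (W : V) :
    s.η k (s.b (s.b (s.ξ l) (s.ξ m)) W) = s.act (s.b (s.ξ l) (s.ξ m)) (s.η k W) := by
  have hact : s.act (s.b (s.ξ l) (s.ξ m)) (s.η k W)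
      = s.act (s.ξ l) (s.act (s.ξ m) (s.η k W)) - s.act (s.ξ m) (s.act (s.ξ l) (s.η k W)) := by
    simpa [s.hetaxi] using congrArg (s.η k) (s.act_b_smul (s.ξ l) (s.ξ m) (s.ξ k) (s.η k W))
  have J := congrArg (s.η k) (s.hjacobi (s.ξ l) (s.ξ m) W)
  rw [s.hbskew W (s.ξ l), s.b_neg_right, s.hbskew W, map_add, map_add, map_neg, map_neg,
    map_zero, hS.η_b_ξ, hS.η_b_ξ, hS.η_b_ξ, hS.η_b_ξ] at J
  linear_combination -J - hact

theorem IsAlmostParaS.η_b_ξ_ξ (hS : s.IsAlmostParaS) (k l m : Fin p) :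
    s.η k (s.b (s.ξ l) (s.ξ m)) = 0 := by
  have h : s.dEta k (s.ξ l) (s.ξ m) = 0 := by
    rw [hS, Phi, hS.f_ξ, map_zero]
  rw [dEta_eq_zero_iff, act_η_ξ, act_η_ξ] at h
  linear_combination -h

theorem IsAlmostParaS.Phi_b_ξ_ξ (hS : s.IsAlmostParaS) (l m : Fin p) (W : V) :
    s.Phi (s.b (s.ξ l) (s.ξ m)) W = 0 := by
  rw [← hS l, dEta_eq_zero_iff, hS.η_b_ξ_ξ, act_zero, hS.η_b_b_ξ_ξ]
  ring

theorem IsAlmostParaS.b_ξ_ξ (hS : s.IsAlmostParaS) (l m : Fin p) : s.b (s.ξ l) (s.ξ m) = 0 :=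
  s.hrank _ (fun k => hS.η_b_ξ_ξ k l m) (hS.Phi_b_ξ_ξ l m)

end MWPF

theorem paraS_h_xi_zero_general {C V : Type*} [CommRing C] [Algebra ℝ C] [AddCommGroup V]
    [Module ℝ V] [Module C V] {p : ℕ} (s : MWPF C V p)
    (hS : ∀ (i : Fin p) (X Y : V), s.dEta i X Y = s.Phi X Y) :
    ∀ i j : Fin p, s.hmap i (s.ξ j) = 0 := by
  intro i j
  rw [MWPF.hmap, MWPF.Lief, MWPF.IsAlmostParaS.f_ξ hS, s.b_zero_right,
    MWPF.IsAlmostParaS.b_ξ_ξ hS, map_zero, sub_zero, smul_zero]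

/-- on a weak almost para-S-manifold, `h_i ξ_j = 0`, where
`h_i = (1/2) £_{ξ_i} f`. -/
theorem paraS_h_xi_zero {C V : Type*} [CommRing C] [Algebra ℝ C] [AddCommGroup V]
    [Module ℝ V] [Module C V] [IsScalarTower ℝ C V] {p : ℕ} (s : MWPF C V p)
    (hS : ∀ (i : Fin p) (X Y : V), s.dEta i X Y = s.Phi X Y) :
    ∀ i j : Fin p, s.hmap i (s.ξ j) = 0 :=
  paraS_h_xi_zero_general s hS
end
end
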